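/- arXiv:2004.06661 — 2 statements merged into one kernel-verified Lean document; each statement's English description precedes it below -/
import Mathlib

section
/- Let Ã be a real m×k matrix with ÃᵀÃ invertible, let B̃ = (ÃᵀÃ)⁻¹, let y ∈ ℝᵐ, and let x̂ = B̃Ãᵀy. Then for each index i ∈ {1,…,k}, the increase in squared residual caused by deleting the i-th column satisfies ‖R_{Ã∖i} y‖² − ‖R_Ã y‖² = x̂(i)² / B̃(i,i), where Ã∖i is Ã with its i-th column deleted (whose Gram matrix is invertible) and B̃(i,i) > 0. Consequently, the column whose removal increases the residual least is the one minimizing x̂(i)²/B̃(i,i) over i. -/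
open Matrix

noncomputable section

/-- `P_A = A (AᵀA)⁻¹ Aᵀ`, the orthogonal projection onto the column span of `A`. -/
def proj {m : ℕ} {ι : Type} [Fintype ι] [DecidableEq ι]
    (A : Matrix (Fin m) ι ℝ) : Matrix (Fin m) (Fin m) ℝ :=
  A * (Aᵀ * A)⁻¹ * Aᵀ

/-- `R_A = I − P_A`. -/
def resid {m : ℕ} {ι : Type} [Fintype ι] [DecidableEq ι]
    (A : Matrix (Fin m) ι ℝ) : Matrix (Fin m) (Fin m) ℝ :=
  1 - proj A

/-- `A` with its `i`-th column deleted. -/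
def delCol {m k : ℕ} (A : Matrix (Fin m) (Fin k) ℝ) (i : Fin k) :
    Matrix (Fin m) {j : Fin k // j ≠ i} ℝ :=
  A.submatrix id fun j => (j : Fin k)

/-!
With `G = AᵀA` and `B = G⁻¹`, the Gram matrix of `A ∖ i` is `G` with row and column `i` deleted,
and its inverse is the Schur complement `K = B - B eᵢ eᵢᵀ B / B i i` of the pivot `B i i`
restricted to the remaining indices (`B i i > 0` since `B` is positive definite). As `K` has a
zero `i`-th row and column, `P_{A ∖ i} = A K Aᵀ`, so the two projections differ by the rank-one
term `(A B eᵢ)(A B eᵢ)ᵀ / B i i`. Since `‖R_A y‖² = ‖y‖² - yᵀ P_A y`, the residual increases by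
`(eᵢᵀ B Aᵀ y)² / B i i = x̂ᵢ² / B i i`.
-/

namespace Matrix

variable {α α' β β' ι R : Type*}

theorem submatrix_mul_subtype_ne [Fintype ι] [NonUnitalNonAssocSemiring R] [DecidableEq ι]
    (X : Matrix α ι R) (Y : Matrix ι β R) (i : ι) (f : α' → α) (g : β' → β)
    (h : ∀ a b, X a i * Y i b = 0) :
    X.submatrix f (Subtype.val : {j : ι // j ≠ i} → ι) *
      Y.submatrix (Subtype.val : {j : ι // j ≠ i} → ι) g = (X * Y).submatrix f g := by
  ext a b
  rw [mul_apply, submatrix_apply, mul_apply, Fintype.sum_eq_add_sum_subtype_ne _ i, h, zero_add]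
  rfl

/-- The Schur complement of the pivot `B i i` in `B`, kept on the full index set. -/
def pivotSchurCompl [Field R] (B : Matrix ι ι R) (i : ι) : Matrix ι ι R :=
  B - (B i i)⁻¹ • vecMulVec (fun s => B s i) (B i)

section pivotSchurCompl

variable [Field R] {B : Matrix ι ι R} {i : ι}

theorem pivotSchurCompl_apply_pivot_row (hB : B i i ≠ 0) (t : ι) :
    pivotSchurCompl B i i t = 0 := by
  simp [pivotSchurCompl, vecMulVec_apply, hB]

theorem pivotSchurCompl_apply_pivot_col (hB : B i i ≠ 0) (s : ι) :
    pivotSchurCompl B i s i = 0 := by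
  simp only [pivotSchurCompl, sub_apply, smul_apply, vecMulVec_apply, smul_eq_mul]
  field_simp
  ring

theorem submatrix_mul_pivotSchurCompl_submatrix [Fintype ι] [DecidableEq ι] {G : Matrix ι ι R}
    (hGB : G * B = 1) (hB : B i i ≠ 0) :
    G.submatrix (↑) (↑) * (pivotSchurCompl B i).submatrix (↑) (↑) =
      (1 : Matrix {j : ι // j ≠ i} {j : ι // j ≠ i} R) := by
  rw [submatrix_mul_subtype_ne _ _ _ _ _
    fun _ _ => by rw [pivotSchurCompl_apply_pivot_row hB, mul_zero]]
  ext s t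
  have hGcol : (G *ᵥ fun r => B r i) s = 0 := by
    simpa [mulVec, dotProduct, ← mul_apply, hGB, one_apply] using s.2
  simp [pivotSchurCompl, mul_sub, hGB, mul_vecMulVec, vecMulVec_apply, hGcol,
    one_apply, Subtype.ext_iff]

theorem dotProduct_pivotSchurCompl_mulVec [Fintype ι] (hB : Bᵀ = B) (i : ι)
    (v : ι → R) :
    v ⬝ᵥ (pivotSchurCompl B i *ᵥ v) = v ⬝ᵥ (B *ᵥ v) - (B *ᵥ v) i ^ 2 / B i i := by
  have hcol : v ⬝ᵥ (fun s => B s i) = (B *ᵥ v) i := by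
    conv_rhs => rw [← hB]
    simp [mulVec, dotProduct, mul_comm]
  have hrow : B i ⬝ᵥ v = (B *ᵥ v) i := rfl
  simp only [pivotSchurCompl, sub_mulVec, smul_mulVec, vecMulVec_mulVec, op_smul_eq_smul,
    dotProduct_sub, dotProduct_smul, hcol, hrow, smul_eq_mul]
  ring

end pivotSchurCompl

theorem dotProduct_mul_mul_transpose_mulVec {m n : Type*} [Fintype m] [Fintype n] [CommSemiring R]
    (A : Matrix m n R) (M : Matrix n n R) (y : m → R) :
    y ⬝ᵥ ((A * M * Aᵀ) *ᵥ y) = (Aᵀ *ᵥ y) ⬝ᵥ (M *ᵥ (Aᵀ *ᵥ y)) := by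
  rw [← mulVec_mulVec, ← mulVec_mulVec, dotProduct_mulVec, mulVec_transpose]

theorem posDef_transpose_mul_self_of_isUnit {m n : Type*} [Fintype m] [Fintype n] [DecidableEq n]
    {A : Matrix m n ℝ} (h : IsUnit (Aᵀ * A)) : (Aᵀ * A).PosDef := by
  rw [← conjTranspose_eq_transpose_of_trivial] at h ⊢
  exact (posSemidef_conjTranspose_mul_self A).posDef_iff_isUnit.mpr h

end Matrix

section Projection

variable {m : ℕ} {ι : Type} [Fintype ι] [DecidableEq ι] {A : Matrix (Fin m) ι ℝ}

theorem proj_transpose (A : Matrix (Fin m) ι ℝ) : (proj A)ᵀ = proj A := by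
  simp [proj, transpose_mul, transpose_nonsing_inv, Matrix.mul_assoc]

theorem proj_mul_proj (h : IsUnit (Aᵀ * A)) : proj A * proj A = proj A := by
  have hGram : (Aᵀ * A)⁻¹ * (Aᵀ * A) = 1 := nonsing_inv_mul _ ((isUnit_iff_isUnit_det _).mp h)
  calc proj A * proj A = A * ((Aᵀ * A)⁻¹ * (Aᵀ * A) * (Aᵀ * A)⁻¹) * Aᵀ := by
        simp only [proj, Matrix.mul_assoc]
    _ = proj A := by rw [hGram, Matrix.one_mul, proj, Matrix.mul_assoc]

theorem transpose_resid_mul_resid (h : IsUnit (Aᵀ * A)) : (resid A)ᵀ * resid A = resid A := by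
  rw [resid, transpose_sub, transpose_one, proj_transpose, Matrix.sub_mul, Matrix.mul_sub,
    Matrix.mul_sub, proj_mul_proj h, Matrix.one_mul, Matrix.mul_one, Matrix.one_mul, sub_self,
    sub_zero]

theorem resid_mulVec_dotProduct_self (h : IsUnit (Aᵀ * A)) (y : Fin m → ℝ) :
    (resid A *ᵥ y) ⬝ᵥ (resid A *ᵥ y) = y ⬝ᵥ y - y ⬝ᵥ (proj A *ᵥ y) := by
  rw [dotProduct_mulVec, ← mulVec_transpose, mulVec_mulVec, transpose_resid_mul_resid h, resid,
    sub_mulVec, one_mulVec, sub_dotProduct, dotProduct_comm (proj A *ᵥ y)]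

end Projection

section DeleteColumn

variable {m k : ℕ} {A : Matrix (Fin m) (Fin k) ℝ}

theorem transpose_delCol_mul_delCol (A : Matrix (Fin m) (Fin k) ℝ) (i : Fin k) :
    (delCol A i)ᵀ * delCol A i = (Aᵀ * A).submatrix Subtype.val Subtype.val := by
  rw [delCol, transpose_submatrix, submatrix_mul _ _ _ _ _ Function.bijective_id]

theorem inv_transpose_mul_self_apply_self_pos (h : IsUnit (Aᵀ * A)) (i : Fin k) : 0 < (Aᵀ * A)⁻¹ i i :=
  (posDef_transpose_mul_self_of_isUnit h).inv.diag_pos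

theorem transpose_delCol_mul_delCol_mul_pivotSchurCompl (h : IsUnit (Aᵀ * A)) (i : Fin k) :
    (delCol A i)ᵀ * delCol A i *
      ((Aᵀ * A)⁻¹.pivotSchurCompl i).submatrix Subtype.val Subtype.val = 1 := by
  rw [transpose_delCol_mul_delCol]
  exact submatrix_mul_pivotSchurCompl_submatrix
    (mul_nonsing_inv _ ((isUnit_iff_isUnit_det _).mp h)) (inv_transpose_mul_self_apply_self_pos h i).ne'

theorem isUnit_transpose_delCol_mul_delCol (h : IsUnit (Aᵀ * A)) (i : Fin k) :
    IsUnit ((delCol A i)ᵀ * delCol A i) :=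
  (isUnit_iff_isUnit_det _).mpr
    (isUnit_det_of_right_inverse (transpose_delCol_mul_delCol_mul_pivotSchurCompl h i))

theorem proj_delCol (h : IsUnit (Aᵀ * A)) (i : Fin k) :
    proj (delCol A i) = A * (Aᵀ * A)⁻¹.pivotSchurCompl i * Aᵀ := by
  have hpiv := (inv_transpose_mul_self_apply_self_pos h i).ne'
  rw [proj, inv_eq_right_inv (transpose_delCol_mul_delCol_mul_pivotSchurCompl h i), delCol,
    transpose_submatrix, submatrix_mul_subtype_ne _ _ _ _ _
      fun _ _ => by rw [pivotSchurCompl_apply_pivot_row hpiv, mul_zero],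
    submatrix_mul_subtype_ne _ _ _ _ _
      fun _ _ => by simp [mul_apply, pivotSchurCompl_apply_pivot_col hpiv], submatrix_id_id]

theorem resid_delCol_mulVec_dotProduct_self_sub (h : IsUnit (Aᵀ * A)) (y : Fin m → ℝ)
    (i : Fin k) :
    (resid (delCol A i) *ᵥ y) ⬝ᵥ (resid (delCol A i) *ᵥ y) - (resid A *ᵥ y) ⬝ᵥ (resid A *ᵥ y) =
      ((Aᵀ * A)⁻¹ *ᵥ (Aᵀ *ᵥ y)) i ^ 2 / (Aᵀ * A)⁻¹ i i := by
  have hsymm : (Aᵀ * A)⁻¹ᵀ = (Aᵀ * A)⁻¹ := by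
    rw [transpose_nonsing_inv, transpose_mul, transpose_transpose]
  rw [resid_mulVec_dotProduct_self h,
    resid_mulVec_dotProduct_self (isUnit_transpose_delCol_mul_delCol h i), proj_delCol h,
    dotProduct_mul_mul_transpose_mulVec, dotProduct_pivotSchurCompl_mulVec hsymm, proj,
    dotProduct_mul_mul_transpose_mulVec]
  ring

end DeleteColumn

/-- The increase in squared residual caused by deleting a column, and the
corresponding least-contributing column criterion. -/
theorem stmt4 {m k : ℕ} (At : Matrix (Fin m) (Fin k) ℝ) (h : IsUnit (Atᵀ * At))
    (Bt : Matrix (Fin k) (Fin k) ℝ) (hBt : Bt = (Atᵀ * At)⁻¹)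
    (y : Fin m → ℝ) (xhat : Fin k → ℝ) (hx : xhat = Bt *ᵥ (Atᵀ *ᵥ y)) :
    (∀ i : Fin k,
        IsUnit ((delCol At i)ᵀ * delCol At i) ∧
        0 < Bt i i ∧
        (resid (delCol At i) *ᵥ y) ⬝ᵥ (resid (delCol At i) *ᵥ y) -
            (resid At *ᵥ y) ⬝ᵥ (resid At *ᵥ y) =
          xhat i ^ 2 / Bt i i) ∧
      (∀ i j : Fin k,
        xhat i ^ 2 / Bt i i ≤ xhat j ^ 2 / Bt j j →
          (resid (delCol At i) *ᵥ y) ⬝ᵥ (resid (delCol At i) *ᵥ y) ≤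
            (resid (delCol At j) *ᵥ y) ⬝ᵥ (resid (delCol At j) *ᵥ y)) := by
  subst hBt hx
  have hincrease := resid_delCol_mulVec_dotProduct_self_sub h y
  refine ⟨fun i => ⟨isUnit_transpose_delCol_mul_delCol h i, inv_transpose_mul_self_apply_self_pos h i, hincrease i⟩,
    fun i j hij => ?_⟩
  linarith [hincrease i, hincrease j]

end
end

section
/- Let M ∈ ℝ^{m×n} have unit-norm columns and satisfy the RIP of order 2k with constant δ ∈ (0,1). Let x ∈ ℝⁿ have support L with |L| = k, let T ⊆ {1,…,n} with |T| ≤ k and L ⊄ T, set κ = |L∖T| ≥ 1, let x̃ be x restricted to L∖T (zero elsewhere), and let ỹ = M x̃. Then there exists an index i ∈ L∖T such that ⟨R_T m_(i), R_T ỹ⟩² ≥ (c_δ/κ) ‖R_T m_(i)‖² ‖R_T ỹ‖², where c_δ = (1−δ²)(1−δ); in other words, the squared cosine of the angle between R_T m_(i) and R_T ỹ is at least c_δ/κ. -/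
/-! With `a_j = ⟨R_T m_(j), R_T ỹ⟩ = ⟨m_(j), R_T ỹ⟩` (RIP makes the Gram matrix `M_TᵀM_T`
invertible, so `R_T` is an orthogonal projection), we have
`‖R_T ỹ‖² = ⟨ỹ, R_T ỹ⟩ = ∑_{j ∈ L∖T} x_j a_j ≤ ‖x̃‖² · κ · max_j a_j²` by Cauchy–Schwarz.
On the other hand `R_T ỹ = M z` with `z` equal to `x̃` off `T` and supported on `L ∪ T`, so
RIP of order `2k` gives `‖R_T ỹ‖² ≥ (1 - δ)‖z‖² ≥ (1 - δ)‖x̃‖²`. Hence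
`(1 - δ)‖R_T ỹ‖² ≤ κ a_i²` for the maximising `i`, and `‖R_T m_(i)‖² ≤ ‖m_(i)‖² = 1` together
with `c_δ ≤ 1 - δ` finishes the proof. -/

open Matrix

noncomputable section

/-- `M` satisfies the RIP of order `s` with constant `δ` if
`(1−δ)‖v‖² ≤ ‖Mv‖² ≤ (1+δ)‖v‖²` for every `v` with at most `s` nonzero entries. -/
def RIP {m n : ℕ} (M : Matrix (Fin m) (Fin n) ℝ) (s : ℕ) (δ : ℝ) : Prop :=
  ∀ v : Fin n → ℝ, (∃ S : Finset (Fin n), S.card ≤ s ∧ ∀ i ∉ S, v i = 0) →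
    (1 - δ) * (v ⬝ᵥ v) ≤ (M *ᵥ v) ⬝ᵥ (M *ᵥ v) ∧
      (M *ᵥ v) ⬝ᵥ (M *ᵥ v) ≤ (1 + δ) * (v ⬝ᵥ v)

/-- `M_T`: the submatrix of `M` of the columns indexed by `T`. -/
def colsOf {m n : ℕ} (M : Matrix (Fin m) (Fin n) ℝ) (T : Finset (Fin n)) :
    Matrix (Fin m) {i // i ∈ T} ℝ :=
  M.submatrix id fun j => (j : Fin n)

/-- `P_T = M_T (M_TᵀM_T)⁻¹ M_Tᵀ`. -/
def projT {m n : ℕ} (M : Matrix (Fin m) (Fin n) ℝ) (T : Finset (Fin n)) :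
    Matrix (Fin m) (Fin m) ℝ :=
  colsOf M T * ((colsOf M T)ᵀ * colsOf M T)⁻¹ * (colsOf M T)ᵀ

/-- `R_T = I − P_T`. -/
def residT {m n : ℕ} (M : Matrix (Fin m) (Fin n) ℝ) (T : Finset (Fin n)) :
    Matrix (Fin m) (Fin m) ℝ :=
  1 - projT M T

theorem dotProduct_self_nonneg {ι R : Type*} [Fintype ι] [Ring R] [LinearOrder R]
    [IsStrictOrderedRing R] (v : ι → R) : 0 ≤ v ⬝ᵥ v :=
  Finset.sum_nonneg fun i _ => mul_self_nonneg (v i)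

section SymmetricIdempotent

variable {ι R : Type*} [Fintype ι] [CommRing R] {A : Matrix ι ι R}

theorem transpose_eq_of_transpose_mul_self (hA : Aᵀ * A = A) : Aᵀ = A := by
  rw [← hA, transpose_mul, transpose_transpose, hA]

theorem dotProduct_mulVec_mulVec_of_transpose_mul_self (hA : Aᵀ * A = A) (u v : ι → R) :
    (A *ᵥ u) ⬝ᵥ (A *ᵥ v) = u ⬝ᵥ (A *ᵥ v) := by
  rw [dotProduct_comm, dotProduct_mulVec, ← mulVec_transpose, mulVec_mulVec, hA, dotProduct_comm]

variable [DecidableEq ι]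

theorem transpose_one_sub_mul_one_sub (hA : Aᵀ * A = A) : (1 - A)ᵀ * (1 - A) = 1 - A := by
  have hsymm := transpose_eq_of_transpose_mul_self hA
  rw [hsymm] at hA
  rw [transpose_sub, transpose_one, hsymm, Matrix.sub_mul, Matrix.one_mul, Matrix.mul_sub,
    Matrix.mul_one, hA]
  abel

theorem dotProduct_self_one_sub_mulVec_le [LinearOrder R] [IsStrictOrderedRing R]
    (hA : Aᵀ * A = A) (u : ι → R) :
    ((1 - A) *ᵥ u) ⬝ᵥ ((1 - A) *ᵥ u) ≤ u ⬝ᵥ u := by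
  have hAu : 0 ≤ u ⬝ᵥ (A *ᵥ u) := by
    rw [← dotProduct_mulVec_mulVec_of_transpose_mul_self hA]
    exact dotProduct_self_nonneg _
  rw [dotProduct_mulVec_mulVec_of_transpose_mul_self (transpose_one_sub_mul_one_sub hA),
    sub_mulVec, one_mulVec, dotProduct_sub]
  linarith

end SymmetricIdempotent

theorem extend_val_apply_of_not {ι γ : Type*} {p : ι → Prop} (w : Subtype p → γ) (g : ι → γ)
    {i : ι} (hi : ¬p i) : Subtype.val.extend w g i = g i :=
  Function.extend_apply' _ _ _ (by simpa using hi)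

theorem dotProduct_self_le_sub_extend {ι : Type*} [Fintype ι] {T : Finset ι} {v : ι → ℝ}
    (hv : ∀ i ∈ T, v i = 0) (w : T → ℝ) :
    v ⬝ᵥ v ≤ (v - Subtype.val.extend w 0) ⬝ᵥ (v - Subtype.val.extend w 0) := by
  refine Finset.sum_le_sum fun i _ => ?_
  by_cases hi : i ∈ T
  · simpa [hv i hi] using mul_self_nonneg (Subtype.val.extend w 0 i)
  · simp [extend_val_apply_of_not w 0 hi]

theorem exists_mem_sq_dotProduct_le {ι : Type*} [Fintype ι] {S : Finset ι} (hS : S.Nonempty)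
    {v : ι → ℝ} (hv : ∀ i ∉ S, v i = 0) (a : ι → ℝ) :
    ∃ i ∈ S, (v ⬝ᵥ a) ^ 2 ≤ (v ⬝ᵥ v) * (S.card * a i ^ 2) := by
  have hsum : ∀ b : ι → ℝ, v ⬝ᵥ b = ∑ j ∈ S, v j * b j := fun b =>
    (Finset.sum_subset S.subset_univ fun j _ hj => by simp [hv j hj]).symm
  obtain ⟨i, hi, hmax⟩ := S.exists_max_image (fun j => a j ^ 2) hS
  refine ⟨i, hi, ?_⟩
  calc (v ⬝ᵥ a) ^ 2 ≤ (∑ j ∈ S, v j ^ 2) * ∑ j ∈ S, a j ^ 2 := by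
        rw [hsum]; exact S.sum_mul_sq_le_sq_mul_sq v a
    _ ≤ (v ⬝ᵥ v) * (S.card * a i ^ 2) := by
        rw [hsum]
        simp only [← sq]
        gcongr
        simpa using S.sum_le_card_nsmul _ _ hmax

theorem mul_le_of_sq_le_mul {c X N K : ℝ} (hN : 0 ≤ N) (hK : 0 ≤ K) (hcX : c * X ≤ N)
    (hNX : N ^ 2 ≤ X * K) : c * N ≤ K := by
  rcases hN.eq_or_lt with rfl | hN
  · simpa using hK
  have hX : 0 < X := by nlinarith
  nlinarith

theorem one_sub_sq_mul_one_sub_div_mul_le {δ κ a B N : ℝ} (hδ : δ < 1) (hκ : 0 < κ)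
    (hB0 : 0 ≤ B) (hB1 : B ≤ 1) (hN : 0 ≤ N) (hNa : (1 - δ) * N ≤ κ * a ^ 2) :
    (1 - δ ^ 2) * (1 - δ) / κ * (B * N) ≤ a ^ 2 := by
  rw [div_mul_eq_mul_div, div_le_iff₀ hκ]
  have hB : (1 - δ ^ 2) * B ≤ 1 := by nlinarith [sq_nonneg δ]
  nlinarith [mul_le_mul_of_nonneg_left hB (mul_nonneg (sub_nonneg.2 hδ.le) hN)]

section Projection

variable {m n : ℕ} (M : Matrix (Fin m) (Fin n) ℝ) (T : Finset (Fin n))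

theorem colsOf_mulVec (c : T → ℝ) : colsOf M T *ᵥ c = M *ᵥ Subtype.val.extend c 0 := by
  ext r
  simp only [mulVec, dotProduct, colsOf, submatrix_apply, id]
  rw [← Finset.sum_subset T.subset_univ fun j _ hj => by
    rw [extend_val_apply_of_not c 0 hj, Pi.zero_apply, mul_zero]]
  rw [← Finset.sum_coe_sort T]
  exact Finset.sum_congr rfl fun j _ => by rw [Subtype.val_injective.extend_apply]

theorem projT_mulVec (y : Fin m → ℝ) :
    projT M T *ᵥ y = M *ᵥ Subtype.val.extend
      (((colsOf M T)ᵀ * colsOf M T)⁻¹ *ᵥ ((colsOf M T)ᵀ *ᵥ y)) 0 := by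
  rw [projT, ← mulVec_mulVec, ← mulVec_mulVec, colsOf_mulVec]

theorem transpose_projT : (projT M T)ᵀ = projT M T := by
  rw [projT, transpose_mul, transpose_mul, transpose_transpose, transpose_nonsing_inv,
    transpose_mul, transpose_transpose, Matrix.mul_assoc]

theorem projT_mul_colsOf (hG : IsUnit ((colsOf M T)ᵀ * colsOf M T).det) :
    projT M T * colsOf M T = colsOf M T := by
  rw [projT, Matrix.mul_assoc, Matrix.mul_assoc, nonsing_inv_mul _ hG, Matrix.mul_one]

theorem transpose_projT_mul_projT (hG : IsUnit ((colsOf M T)ᵀ * colsOf M T).det) :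
    (projT M T)ᵀ * projT M T = projT M T := by
  have hP : projT M T = colsOf M T * (((colsOf M T)ᵀ * colsOf M T)⁻¹ * (colsOf M T)ᵀ) :=
    Matrix.mul_assoc _ _ _
  rw [transpose_projT]
  nth_rw 2 [hP]
  rw [← Matrix.mul_assoc, projT_mul_colsOf M T hG, ← hP]

theorem transpose_residT_mul_residT (hG : IsUnit ((colsOf M T)ᵀ * colsOf M T).det) :
    (residT M T)ᵀ * residT M T = residT M T :=
  transpose_one_sub_mul_one_sub (transpose_projT_mul_projT M T hG)

theorem dotProduct_self_residT_mulVec_le (hG : IsUnit ((colsOf M T)ᵀ * colsOf M T).det)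
    (u : Fin m → ℝ) : (residT M T *ᵥ u) ⬝ᵥ (residT M T *ᵥ u) ≤ u ⬝ᵥ u :=
  dotProduct_self_one_sub_mulVec_le (transpose_projT_mul_projT M T hG) u

theorem dotProduct_residT_mulVec_columns (hG : IsUnit ((colsOf M T)ᵀ * colsOf M T).det)
    (v : Fin n → ℝ) :
    v ⬝ᵥ (fun j => (residT M T *ᵥ fun r => M r j) ⬝ᵥ (residT M T *ᵥ (M *ᵥ v))) =
      (residT M T *ᵥ (M *ᵥ v)) ⬝ᵥ (residT M T *ᵥ (M *ᵥ v)) := by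
  simp_rw [dotProduct_mulVec_mulVec_of_transpose_mul_self (transpose_residT_mul_residT M T hG)]
  change v ⬝ᵥ (Mᵀ *ᵥ (residT M T *ᵥ (M *ᵥ v))) = _
  rw [dotProduct_mulVec, vecMul_transpose]

end Projection

namespace RIP

variable {m n s : ℕ} {M : Matrix (Fin m) (Fin n) ℝ} {δ : ℝ}

theorem posDef_gram (h : RIP M s δ) (hδ : δ < 1) {T : Finset (Fin n)} (hT : T.card ≤ s) :
    ((colsOf M T)ᵀ * colsOf M T).PosDef := by
  have hinj : Function.Injective (colsOf M T).mulVec := by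
    intro c d hcd
    have hv := (h (Subtype.val.extend (c - d) 0)
      ⟨T, hT, fun i hi => extend_val_apply_of_not _ 0 hi⟩).1
    rw [← colsOf_mulVec, mulVec_sub, hcd, sub_self, dotProduct_zero] at hv
    have he : Subtype.val.extend (c - d) 0 = 0 := dotProduct_self_eq_zero.mp <|
      le_antisymm (nonpos_of_mul_nonpos_right hv (sub_pos.mpr hδ))
        (dotProduct_self_nonneg _)
    funext j
    simpa [Subtype.val_injective.extend_apply, sub_eq_zero] using congrFun he j
  rw [← conjTranspose_eq_transpose_of_trivial]
  exact PosDef.conjTranspose_mul_self _ hinj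

theorem one_sub_mul_dotProduct_self_le_residT (h : RIP M s δ) (hδ : δ ≤ 1)
    {S T : Finset (Fin n)} (hST : (S ∪ T).card ≤ s) {v : Fin n → ℝ} (hvS : ∀ i ∉ S, v i = 0)
    (hvT : ∀ i ∈ T, v i = 0) :
    (1 - δ) * (v ⬝ᵥ v) ≤
      (residT M T *ᵥ (M *ᵥ v)) ⬝ᵥ (residT M T *ᵥ (M *ᵥ v)) := by
  set w := ((colsOf M T)ᵀ * colsOf M T)⁻¹ *ᵥ ((colsOf M T)ᵀ *ᵥ (M *ᵥ v))
  have hres : residT M T *ᵥ (M *ᵥ v) = M *ᵥ (v - Subtype.val.extend w 0) := by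
    rw [residT, sub_mulVec, one_mulVec, projT_mulVec, mulVec_sub]
  have hsupp : ∀ i ∉ S ∪ T, (v - Subtype.val.extend w 0) i = 0 := fun i hi => by
    rw [Finset.mem_union, not_or] at hi
    simp [hvS i hi.1, extend_val_apply_of_not w 0 hi.2]
  rw [hres]
  calc (1 - δ) * (v ⬝ᵥ v)
      ≤ (1 - δ) * ((v - Subtype.val.extend w 0) ⬝ᵥ (v - Subtype.val.extend w 0)) :=
        mul_le_mul_of_nonneg_left (dotProduct_self_le_sub_extend hvT w) (by linarith)
    _ ≤ _ := (h _ ⟨_, hST, hsupp⟩).1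

end RIP

theorem stmt6_general {m n k : ℕ} (M : Matrix (Fin m) (Fin n) ℝ) (δ : ℝ)
    (hδ1 : δ < 1)
    (hunit : ∀ j : Fin n, (fun r => M r j) ⬝ᵥ (fun r => M r j) = 1)
    (hRIP : RIP M (2 * k) δ)
    (x : Fin n → ℝ) (L : Finset (Fin n))
    (hL : L.card = k)
    (T : Finset (Fin n)) (hT : T.card ≤ k) (hLT : ¬ L ⊆ T)
    (κ : ℕ) (hκ : κ = (L \ T).card)
    (xt : Fin n → ℝ) (hxt : ∀ i, xt i = if i ∈ L \ T then x i else 0)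
    (yt : Fin m → ℝ) (hyt : yt = M *ᵥ xt) :
    ∃ i ∈ L \ T,
      ((residT M T *ᵥ fun r => M r i) ⬝ᵥ (residT M T *ᵥ yt)) ^ 2 ≥
        ((1 - δ ^ 2) * (1 - δ) / (κ : ℝ)) *
          (((residT M T *ᵥ fun r => M r i) ⬝ᵥ (residT M T *ᵥ fun r => M r i)) *
            ((residT M T *ᵥ yt) ⬝ᵥ (residT M T *ᵥ yt))) := by
  subst hyt hκ
  have hS : (L \ T).Nonempty := Finset.sdiff_nonempty.mpr hLT
  have hG : IsUnit ((colsOf M T)ᵀ * colsOf M T).det :=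
    (hRIP.posDef_gram hδ1 (by omega)).det_pos.ne'.isUnit
  have hxtS : ∀ i ∉ L \ T, xt i = 0 := fun i hi => by rw [hxt, if_neg hi]
  have hxtT : ∀ i ∈ T, xt i = 0 := fun i hi => hxtS i fun h => (Finset.mem_sdiff.mp h).2 hi
  have hcard : (L \ T ∪ T).card ≤ 2 * k := by
    rw [Finset.sdiff_union_self_eq_union]
    have := Finset.card_union_le L T
    omega
  obtain ⟨i, hi, hCS⟩ := exists_mem_sq_dotProduct_le hS hxtS
    fun j => (residT M T *ᵥ fun r => M r j) ⬝ᵥ (residT M T *ᵥ (M *ᵥ xt))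
  rw [dotProduct_residT_mulVec_columns M T hG] at hCS
  refine ⟨i, hi, one_sub_sq_mul_one_sub_div_mul_le hδ1 (by exact_mod_cast hS.card_pos)
    (dotProduct_self_nonneg _) (hunit i ▸ dotProduct_self_residT_mulVec_le M T hG _)
    (dotProduct_self_nonneg _) ?_⟩
  exact mul_le_of_sq_le_mul (dotProduct_self_nonneg _) (by positivity)
    (hRIP.one_sub_mul_dotProduct_self_le_residT hδ1.le hcard hxtS hxtT) hCS

theorem stmt6 {m n k : ℕ} (M : Matrix (Fin m) (Fin n) ℝ) (δ : ℝ)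
    (hδ0 : 0 < δ) (hδ1 : δ < 1)
    (hunit : ∀ j : Fin n, (fun r => M r j) ⬝ᵥ (fun r => M r j) = 1)
    (hRIP : RIP M (2 * k) δ)
    (x : Fin n → ℝ) (L : Finset (Fin n)) (hsupp : ∀ i, x i ≠ 0 ↔ i ∈ L)
    (hL : L.card = k)
    (T : Finset (Fin n)) (hT : T.card ≤ k) (hLT : ¬ L ⊆ T)
    (κ : ℕ) (hκ : κ = (L \ T).card)
    (xt : Fin n → ℝ) (hxt : ∀ i, xt i = if i ∈ L \ T then x i else 0)
    (yt : Fin m → ℝ) (hyt : yt = M *ᵥ xt) :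
    ∃ i ∈ L \ T,
      ((residT M T *ᵥ fun r => M r i) ⬝ᵥ (residT M T *ᵥ yt)) ^ 2 ≥
        ((1 - δ ^ 2) * (1 - δ) / (κ : ℝ)) *
          (((residT M T *ᵥ fun r => M r i) ⬝ᵥ (residT M T *ᵥ fun r => M r i)) *
            ((residT M T *ᵥ yt) ⬝ᵥ (residT M T *ᵥ yt))) :=
  stmt6_general M δ hδ1 hunit hRIP x L hL T hT hLT κ hκ xt hxt yt hyt

end
end
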